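/- The strong forcing relation is persistent under elementary extensions: if A ⪯ B and A ⊩ ψ(ā) for an infinitary formula ψ, then B ⊩ ψ(ā). -/

import Mathlib

open FirstOrder

universe u

namespace InfinitaryForcing

variable (L : FirstOrder.Language.{u, u})

/-- Infinitary formulas of `L_{∞,ω}`: set-indexed conjunctions and disjunctions,
finitary quantification, free variables among `Fin n`. -/
inductive InfForm : ℕ → Type (u + 1)
  | equal {n : ℕ} (t₁ t₂ : L.Term (Fin n)) : InfForm n
  | rel {n l : ℕ} (R : L.Relations l) (ts : Fin l → L.Term (Fin n)) : InfForm n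
  | not {n : ℕ} (φ : InfForm n) : InfForm n
  | disj {n : ℕ} {ι : Type u} (Φ : ι → InfForm n) : InfForm n
  | conj {n : ℕ} {ι : Type u} (Φ : ι → InfForm n) : InfForm n
  | ex {n : ℕ} (φ : InfForm (n + 1)) : InfForm n
  | all {n : ℕ} (φ : InfForm (n + 1)) : InfForm n

variable {L}

/-- Tarskian satisfaction for infinitary formulas. -/
def Realize : ∀ {n : ℕ}, InfForm L n → ∀ (M : Type u), L.Structure M → (Fin n → M) → Prop
  | _, .equal t₁ t₂, _M, S, v => letI := S; t₁.realize v = t₂.realize v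
  | _, .rel R ts, _M, S, v => letI := S; Language.Structure.RelMap R fun i => (ts i).realize v
  | _, .not φ, M, S, v => ¬ Realize φ M S v
  | _, .disj Φ, M, S, v => ∃ i, Realize (Φ i) M S v
  | _, .conj Φ, M, S, v => ∀ i, Realize (Φ i) M S v
  | _, .ex φ, M, S, v => ∃ b : M, Realize φ M S (Fin.snoc v b)
  | _, .all φ, M, S, v => ∀ b : M, Realize φ M S (Fin.snoc v b)

/-- Elementary embeddings, with the structures made explicit. -/
abbrev ElemEmb (M N : Type u) (SM : L.Structure M) (SN : L.Structure N) : Type u :=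
  @FirstOrder.Language.ElementaryEmbedding L M N SM SN

/-- The strong forcing relation `A ⊩ ψ(ā)`, where conditions are structures
ordered by elementary extension. -/
def Forces : ∀ {n : ℕ}, InfForm L n → ∀ (M : Type u), L.Structure M → (Fin n → M) → Prop
  | _, .equal t₁ t₂, _M, S, v => letI := S; t₁.realize v = t₂.realize v
  | _, .rel R ts, _M, S, v => letI := S; Language.Structure.RelMap R fun i => (ts i).realize v
  | _, .not φ, M, S, v =>
      ∀ (N : Type u) (SN : L.Structure N) (f : ElemEmb M N S SN),
        ¬ Forces φ N SN (fun i => f.toFun (v i))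
  | _, .disj Φ, M, S, v => ∃ i, Forces (Φ i) M S v
  | _, .conj Φ, M, S, v =>
      ∀ (N : Type u) (SN : L.Structure N) (f : ElemEmb M N S SN) (i : _),
        ∃ (P : Type u) (SP : L.Structure P) (g : ElemEmb N P SN SP),
          Forces (Φ i) P SP (fun k => g.toFun (f.toFun (v k)))
  | _, .ex φ, M, S, v => ∃ b : M, Forces φ M S (Fin.snoc v b)
  | _, .all φ, M, S, v =>
      ∀ (N : Type u) (SN : L.Structure N) (f : ElemEmb M N S SN) (b : N),
        ∃ (P : Type u) (SP : L.Structure P) (g : ElemEmb N P SN SP),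
          Forces φ P SP (Fin.snoc (fun k => g.toFun (f.toFun (v k))) (g.toFun b))

/-- `M` decides `ψ(v)` if it strongly forces `ψ(v)` or `¬ψ(v)`. -/
def Decides {n : ℕ} (ψ : InfForm L n) (M : Type u) (S : L.Structure M) (v : Fin n → M) : Prop :=
  Forces ψ M S v ∨ Forces ψ.not M S v

/-- The weak forcing relation `A ⊩* ψ := A ⊩ ¬¬ψ`. -/
def WForces {n : ℕ} (ψ : InfForm L n) (M : Type u) (S : L.Structure M) (v : Fin n → M) : Prop :=
  Forces ψ.not.not M S v

variable (L)

/-- Finitary (`L_{ω,ω}`) formulas among the infinitary ones. -/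
inductive InfForm.IsFinitary : ∀ {n : ℕ}, InfForm L n → Prop
  | equal {n} (t₁ t₂ : L.Term (Fin n)) : IsFinitary (.equal t₁ t₂)
  | rel {n l} (R : L.Relations l) (ts : Fin l → L.Term (Fin n)) : IsFinitary (.rel R ts)
  | not {n} {φ : InfForm L n} : IsFinitary φ → IsFinitary φ.not
  | disj {n} {ι : Type u} (_ : Finite ι) {Φ : ι → InfForm L n} :
      (∀ i, IsFinitary (Φ i)) → IsFinitary (.disj Φ)
  | conj {n} {ι : Type u} (_ : Finite ι) {Φ : ι → InfForm L n} :
      (∀ i, IsFinitary (Φ i)) → IsFinitary (.conj Φ)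
  | ex {n} {φ : InfForm L (n + 1)} : IsFinitary φ → IsFinitary φ.ex
  | all {n} {φ : InfForm L (n + 1)} : IsFinitary φ → IsFinitary φ.all

/-- Quantifier-free infinitary formulas. -/
inductive InfForm.IsQF : ∀ {n : ℕ}, InfForm L n → Prop
  | equal {n} (t₁ t₂ : L.Term (Fin n)) : IsQF (.equal t₁ t₂)
  | rel {n l} (R : L.Relations l) (ts : Fin l → L.Term (Fin n)) : IsQF (.rel R ts)
  | not {n} {φ : InfForm L n} : IsQF φ → IsQF φ.not
  | disj {n} {ι : Type u} {Φ : ι → InfForm L n} : (∀ i, IsQF (Φ i)) → IsQF (.disj Φ)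
  | conj {n} {ι : Type u} {Φ : ι → InfForm L n} : (∀ i, IsQF (Φ i)) → IsQF (.conj Φ)

/-- `L_{ω₁,ω}` formulas: all conjunctions and disjunctions are countable. -/
inductive InfForm.IsCtble : ∀ {n : ℕ}, InfForm L n → Prop
  | equal {n} (t₁ t₂ : L.Term (Fin n)) : IsCtble (.equal t₁ t₂)
  | rel {n l} (R : L.Relations l) (ts : Fin l → L.Term (Fin n)) : IsCtble (.rel R ts)
  | not {n} {φ : InfForm L n} : IsCtble φ → IsCtble φ.not
  | disj {n} {ι : Type u} (_ : Countable ι) {Φ : ι → InfForm L n} :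
      (∀ i, IsCtble (Φ i)) → IsCtble (.disj Φ)
  | conj {n} {ι : Type u} (_ : Countable ι) {Φ : ι → InfForm L n} :
      (∀ i, IsCtble (Φ i)) → IsCtble (.conj Φ)
  | ex {n} {φ : InfForm L (n + 1)} : IsCtble φ → IsCtble φ.ex
  | all {n} {φ : InfForm L (n + 1)} : IsCtble φ → IsCtble φ.all

/-- A fragment of `L_{∞,ω}`: a family of sets of formulas closed under negation
and subformulas. -/
structure IsFragment (𝔸 : ∀ n : ℕ, Set (InfForm L n)) : Prop where
  not_mem : ∀ {n} {φ : InfForm L n}, φ ∈ 𝔸 n → φ.not ∈ 𝔸 n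
  of_not : ∀ {n} {φ : InfForm L n}, φ.not ∈ 𝔸 n → φ ∈ 𝔸 n
  of_disj : ∀ {n} {ι : Type u} {Φ : ι → InfForm L n}, InfForm.disj Φ ∈ 𝔸 n → ∀ i, Φ i ∈ 𝔸 n
  of_conj : ∀ {n} {ι : Type u} {Φ : ι → InfForm L n}, InfForm.conj Φ ∈ 𝔸 n → ∀ i, Φ i ∈ 𝔸 n
  of_ex : ∀ {n} {φ : InfForm L (n + 1)}, φ.ex ∈ 𝔸 n → φ ∈ 𝔸 (n + 1)
  of_all : ∀ {n} {φ : InfForm L (n + 1)}, φ.all ∈ 𝔸 n → φ ∈ 𝔸 (n + 1)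

variable {L}

/-- `G` is `𝔸`-generic if it decides every instance of every formula of `𝔸`. -/
def IsGeneric (𝔸 : ∀ n : ℕ, Set (InfForm L n)) (G : Type u) (SG : L.Structure G) : Prop :=
  ∀ (n : ℕ) (ψ : InfForm L n), ψ ∈ 𝔸 n → ∀ v : Fin n → G, Decides ψ G SG v

variable (L)

mutual
  /-- Finitary `∃ₙ` formulas: `n` alternating blocks of quantifiers beginning
  with existentials, counting finite conjunctions/disjunctions as free. -/
  inductive IsEx : ℕ → ∀ {k : ℕ}, InfForm L k → Prop
    | equal {m k} (t₁ t₂ : L.Term (Fin k)) : IsEx m (.equal t₁ t₂)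
    | rel {m k l} (R : L.Relations l) (ts : Fin l → L.Term (Fin k)) : IsEx m (.rel R ts)
    | not {m k} {φ : InfForm L k} : IsAll m φ → IsEx m φ.not
    | disj {m k} {ι : Type u} (_ : Finite ι) {Φ : ι → InfForm L k} :
        (∀ i, IsEx m (Φ i)) → IsEx m (.disj Φ)
    | conj {m k} {ι : Type u} (_ : Finite ι) {Φ : ι → InfForm L k} :
        (∀ i, IsEx m (Φ i)) → IsEx m (.conj Φ)
    | ex {m k} {φ : InfForm L (k + 1)} : IsEx m φ → 1 ≤ m → IsEx m φ.ex
    | exStep {m k} {φ : InfForm L (k + 1)} : IsAll m φ → IsEx (m + 1) φ.ex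

  /-- Finitary `∀ₙ` formulas. -/
  inductive IsAll : ℕ → ∀ {k : ℕ}, InfForm L k → Prop
    | equal {m k} (t₁ t₂ : L.Term (Fin k)) : IsAll m (.equal t₁ t₂)
    | rel {m k l} (R : L.Relations l) (ts : Fin l → L.Term (Fin k)) : IsAll m (.rel R ts)
    | not {m k} {φ : InfForm L k} : IsEx m φ → IsAll m φ.not
    | disj {m k} {ι : Type u} (_ : Finite ι) {Φ : ι → InfForm L k} :
        (∀ i, IsAll m (Φ i)) → IsAll m (.disj Φ)
    | conj {m k} {ι : Type u} (_ : Finite ι) {Φ : ι → InfForm L k} :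
        (∀ i, IsAll m (Φ i)) → IsAll m (.conj Φ)
    | all {m k} {φ : InfForm L (k + 1)} : IsAll m φ → 1 ≤ m → IsAll m φ.all
    | allStep {m k} {φ : InfForm L (k + 1)} : IsEx m φ → IsAll (m + 1) φ.all
end

/-- `f : A → B` is an `n`-elementary map (`A ⪯ₙ B` when `f` is an inclusion):
every finitary `∃ₙ` or `∀ₙ` formula transfers along `f`. -/
def IsNElemMap (n : ℕ) {A B : Type u} (SA : L.Structure A) (SB : L.Structure B)
    (f : A → B) : Prop :=
  ∀ (k : ℕ) (φ : InfForm L k), (IsEx L n φ ∨ IsAll L n φ) →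
    ∀ v : Fin k → A, Realize φ A SA v ↔ Realize φ B SB (fun i => f (v i))

/-- `f : A → B` is an elementary map: every finitary formula transfers along `f`. -/
def IsElemMap {A B : Type u} (SA : L.Structure A) (SB : L.Structure B)
    (f : A → B) : Prop :=
  ∀ (k : ℕ) (φ : InfForm L k), InfForm.IsFinitary L φ →
    ∀ v : Fin k → A, Realize φ A SA v ↔ Realize φ B SB (fun i => f (v i))

/-- Strong forcing is persistent under elementary extensions: if `A ⪯ B` and
`A ⊩ ψ(ā)` for an infinitary formula `ψ`, then `B ⊩ ψ(ā)`. -/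
theorem stmt5 {L : FirstOrder.Language.{u, u}} {n : ℕ} (ψ : InfForm L n)
    {A B : Type u} (SA : L.Structure A) (SB : L.Structure B) (f : ElemEmb A B SA SB)
    (v : Fin n → A) (h : Forces ψ A SA v) :
    Forces ψ B SB (fun i => f.toFun (v i)) := by
  induction ψ generalizing A B with
  | equal t₁ t₂ =>
      let _ := SA; let _ := SB
      change t₁.realize (f ∘ v) = t₂.realize (f ∘ v)
      rw [Language.HomClass.realize_term, Language.HomClass.realize_term]
      exact congrArg f h
  | rel R ts =>
      let _ := SA; let _ := SB
      change Language.Structure.RelMap R fun i => (ts i).realize (f ∘ v)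
      simp only [Language.HomClass.realize_term]
      exact (f.map_rel R _).mpr h
  -- `¬`, `⋀` and `∀` quantify over all elementary extensions of the condition,
  -- and every elementary extension `g` of `B` is one of `A` through `g ∘ f`.
  | not φ _ => exact fun N SN g => h N SN (g.comp f)
  | conj Φ _ => exact fun N SN g => h N SN (g.comp f)
  | all φ _ => exact fun N SN g => h N SN (g.comp f)
  | disj Φ ih =>
      obtain ⟨i, hi⟩ := h
      exact ⟨i, ih i SA SB f v hi⟩
  | ex φ ih =>
      obtain ⟨b, hb⟩ := h
      exact ⟨f b, Fin.comp_snoc f v b ▸ ih SA SB f _ hb⟩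

end InfinitaryForcing
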